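/- Let G be a finite group and H a normal subgroup of G such that the quotient group G/H is cyclic. Let ρ and ρ' be irreducible complex representations of G. Then either the restrictions of ρ and ρ' to H are isomorphic, or these restrictions have no irreducible constituent of H in common, i.e. (1/|H|) Σ_{h∈H} χ_ρ(h) conj(χ_{ρ'}(h)) = 0. -/

import Mathlib

/-!
The character inner product over `H` is the dimension of the space of `H`-equivariant maps
`ρ'|_H → ρ|_H`, so if it is nonzero such maps exist. Since `H` is normal, conjugation by a lift
`g` of a generator of `G ⧸ H` acts linearly on this space, so it has an eigenvector `w`:
`ρ g ∘ w = μ • (w ∘ ρ' g)`. The elements of `G` that commute with `w` up to a nonzero scalar form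
a subgroup containing `H` and `g`, hence all of `G`. So `ker w` and `range w` are `G`-stable, and
Schur's argument makes `w` an isomorphism.
-/

open CategoryTheory Module Representation

theorem Module.End.trace_pow_eq_sum_of_iSup_eigenspace_eq_top {K V : Type*} [Field K]
    [AddCommGroup V] [Module K V] [FiniteDimensional K V] {f : End K V}
    (hf : ⨆ μ, f.eigenspace μ = ⊤) (k : ℕ) :
    LinearMap.trace K V (f ^ k) =
      ∑ μ ∈ f.finite_hasEigenvalue.toFinset, μ ^ k * finrank K (f.eigenspace μ) := by
  classical
  have hint :=
    DirectSum.isInternal_submodule_of_iSupIndep_of_iSup_eq_top f.eigenspaces_iSupIndep hf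
  have hmaps (μ : K) : Set.MapsTo (f ^ k) (f.eigenspace μ) (f.eigenspace μ) :=
    mapsTo_genEigenspace_of_comm ((Commute.refl f).pow_right k) μ 1
  rw [LinearMap.trace_eq_sum_trace_restrict' hint f.finite_hasEigenvalue hmaps]
  refine Finset.sum_congr rfl fun μ _ => ?_
  have hrestrict : (f ^ k).restrict (hmaps μ) = μ ^ k • LinearMap.id := by
    rw [← pow_restrict k fun _ => (mapsTo_genEigenspace_of_comm (.refl f) μ 1 ·),
      restrict_eigenspace, smul_pow, ← one_eq_id, one_pow]
  rw [hrestrict, map_smul, LinearMap.trace_id, smul_eq_mul]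

open Polynomial in
theorem Module.End.conj_trace_eq_trace_pow_sub_one {V : Type*} [AddCommGroup V] [Module ℂ V]
    [FiniteDimensional ℂ V] {f : End ℂ V} {n : ℕ} (hn : n ≠ 0) (hf : f ^ n = 1) :
    starRingEnd ℂ (LinearMap.trace ℂ V f) = LinearMap.trace ℂ V (f ^ (n - 1)) := by
  have hss : f.IsSemisimple := isSemisimple_of_squarefree_aeval_eq_zero
    (separable_X_pow_sub_C 1 (by exact_mod_cast hn) one_ne_zero).squarefree (by simp [hf])
  have htop := hss.iSup_eigenspace_eq_top
  conv_lhs => rw [← pow_one f]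
  rw [trace_pow_eq_sum_of_iSup_eigenspace_eq_top htop,
    trace_pow_eq_sum_of_iSup_eigenspace_eq_top htop, map_sum]
  refine Finset.sum_congr rfl fun μ hμ => ?_
  have hμn : μ ^ n = 1 := by
    obtain ⟨v, hv⟩ := ((Set.Finite.mem_toFinset _).mp hμ).exists_hasEigenvector
    have h := hv.pow_apply n
    rw [hf, one_apply] at h
    exact smul_left_injective ℂ hv.2 (by simpa using h.symm)
  rw [map_mul, map_natCast, pow_one,
    ← Complex.inv_eq_conj (Complex.norm_eq_one_of_pow_eq_one hμn hn),
    inv_eq_of_mul_eq_one_right (by rw [mul_pow_sub_one hn, hμn])]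

theorem Subgroup.eq_top_of_le_of_mem_of_forall_mem_zpowers_mk {G : Type*} [Group G]
    {H K : Subgroup G} [H.Normal] {g : G} (hg : ∀ y : G ⧸ H, y ∈ zpowers (g : G ⧸ H))
    (hHK : H ≤ K) (hgK : g ∈ K) : K = ⊤ := by
  refine eq_top_iff.mpr fun x _ => ?_
  obtain ⟨n, hn⟩ := hg x
  have hx : (g ^ n)⁻¹ * x ∈ H := QuotientGroup.eq.mp (by simpa using hn)
  simpa using K.mul_mem (K.zpow_mem hgK n) (hHK hx)

namespace Representation

section CommRing

variable {k G V W : Type*} [CommRing k] [Group G] [AddCommGroup V] [Module k V]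
  [AddCommGroup W] [Module k W] (ρ : Representation k G V) (σ : Representation k G W)

def scalarIntertwiningSubgroup (w : V →ₗ[k] W) : Subgroup G where
  carrier := {x | ∃ c : kˣ, σ x ∘ₗ w = (c : k) • (w ∘ₗ ρ x)}
  one_mem' := ⟨1, by simp only [map_one, Units.val_one, one_smul]; rfl⟩
  mul_mem' := by
    rintro x y ⟨c, hc⟩ ⟨d, hd⟩
    refine ⟨c * d, LinearMap.ext fun v => ?_⟩
    have hcv := congr($hc (ρ y v))
    have hdv := congr($hd v)
    simp only [LinearMap.comp_apply, LinearMap.smul_apply] at hcv hdv ⊢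
    rw [map_mul, map_mul, Module.End.mul_apply, Module.End.mul_apply, hdv, map_smul, hcv,
      smul_smul, Units.val_mul, mul_comm]
  inv_mem' := by
    rintro x ⟨c, hc⟩
    refine ⟨c⁻¹, LinearMap.ext fun v => ?_⟩
    have hcv := congr($hc (ρ x⁻¹ v))
    simp only [LinearMap.comp_apply, LinearMap.smul_apply, self_inv_apply] at hcv ⊢
    calc σ x⁻¹ (w v) = σ x⁻¹ (((c⁻¹ : kˣ) : k) • ((c : k) • w v)) := by
          rw [smul_smul, Units.inv_mul, one_smul]
      _ = _ := by rw [← hcv, map_smul, inv_self_apply]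

variable (N : Subgroup G)

theorem IntertwiningMap.le_scalarIntertwiningSubgroup
    (f : IntertwiningMap (ρ.comp N.subtype) (σ.comp N.subtype)) :
    N ≤ scalarIntertwiningSubgroup ρ σ f.toLinearMap := fun n hn =>
  ⟨1, by simpa using (f.isIntertwining' ⟨n, hn⟩).symm⟩

variable [hN : N.Normal]

def IntertwiningMap.conjRes (g : G) :
    Module.End k (IntertwiningMap (ρ.comp N.subtype) (σ.comp N.subtype)) where
  toFun f := ⟨σ g ∘ₗ f.toLinearMap ∘ₗ ρ g⁻¹, fun n => LinearMap.ext fun v => by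
    have hn : g⁻¹ * n * g ∈ N := by simpa using hN.conj_mem n n.2 g⁻¹
    have h := IntertwiningMap.isIntertwining _ _ f ⟨_, hn⟩ (ρ g⁻¹ v)
    simp only [MonoidHom.comp_apply, Subgroup.coe_subtype] at h
    simp only [LinearMap.comp_apply, MonoidHom.comp_apply, Subgroup.coe_subtype,
      toLinearMap_apply]
    rw [← Module.End.mul_apply, ← map_mul, show g⁻¹ * n = (g⁻¹ * n * g) * g⁻¹ by group,
      map_mul, Module.End.mul_apply, h, ← Module.End.mul_apply, ← map_mul,
      ← Module.End.mul_apply (σ n), ← map_mul]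
    congr 2
    group⟩
  map_add' f f' := by ext; simp
  map_smul' c f := by ext; simp

theorem IntertwiningMap.comp_eq_smul_of_conjRes_eq_smul {g : G} {μ : k}
    {f : IntertwiningMap (ρ.comp N.subtype) (σ.comp N.subtype)}
    (h : conjRes ρ σ N g f = μ • f) : σ g ∘ₗ f.toLinearMap = μ • (f.toLinearMap ∘ₗ ρ g) := by
  ext v
  simpa [conjRes] using congr($h (ρ g v))

end CommRing

variable {k G V W : Type*} [Field k] [Group G] [AddCommGroup V] [Module k V]
  [AddCommGroup W] [Module k W] (ρ : Representation k G V) (σ : Representation k G W)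
  (N : Subgroup G) [N.Normal]

theorem IntertwiningMap.mem_scalarIntertwiningSubgroup_of_conjRes_eq_smul {g : G} {μ : k}
    {f : IntertwiningMap (ρ.comp N.subtype) (σ.comp N.subtype)} (hf : f ≠ 0)
    (h : conjRes ρ σ N g f = μ • f) : g ∈ scalarIntertwiningSubgroup ρ σ f.toLinearMap := by
  have hcomp := comp_eq_smul_of_conjRes_eq_smul ρ σ N h
  have hμ : μ ≠ 0 := by
    rintro rfl
    refine hf (IntertwiningMap.ext (LinearMap.ext fun v => ?_))
    have hv : σ g (f v) = 0 := by simpa using congr($hcomp v)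
    show f v = 0
    rw [← inv_self_apply σ g (f v), hv, map_zero]
  exact ⟨Units.mk0 μ hμ, hcomp⟩

end Representation

namespace FDRep

theorem eq_bot_or_eq_top_of_simple {k : Type*} {G : Type*} [Field k] [Monoid G]
    (V : FDRep k G) [Simple V] (p : Submodule k V) (hp : ∀ g, ∀ v ∈ p, V.ρ g v ∈ p) :
    p = ⊥ ∨ p = ⊤ := by
  let P : Subrepresentation V.ρ := ⟨p, fun g _ hv => hp g _ hv⟩
  let ι : FDRep.of P.toRepresentation ⟶ V := ⟨FGModuleCat.ofHom p.subtype, fun _ => rfl⟩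
  have : Mono ι := ConcreteCategory.mono_of_injective ι Subtype.val_injective
  by_cases hι : ι = 0
  · refine .inl (eq_bot_iff.mpr fun v hv => ?_)
    exact congr(ConcreteCategory.hom $hι ⟨v, hv⟩)
  · have := isIso_of_mono_of_nonzero hι
    refine .inr (eq_top_iff.mpr fun v _ => ?_)
    obtain ⟨x, rfl⟩ := (ConcreteCategory.bijective_of_isIso ι).2 v
    exact x.2

variable {k : Type*} {G : Type*} [Field k] [Group G]

theorem bijective_of_scalarIntertwiningSubgroup_eq_top {V W : FDRep k G} [Simple V] [Simple W]
    {w : V →ₗ[k] W} (hw : w ≠ 0) (h : scalarIntertwiningSubgroup V.ρ W.ρ w = ⊤) :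
    Function.Bijective w := by
  have hmem (x : G) : x ∈ scalarIntertwiningSubgroup V.ρ W.ρ w := h ▸ Subgroup.mem_top x
  constructor
  · rw [← LinearMap.ker_eq_bot]
    refine (eq_bot_or_eq_top_of_simple V _ fun x v hv => ?_).resolve_right
      fun htop => hw (LinearMap.ker_eq_top.mp htop)
    obtain ⟨c, hc⟩ := hmem x
    rw [LinearMap.mem_ker] at hv ⊢
    simpa [hv] using congr($hc v).symm
  · rw [← LinearMap.range_eq_top]
    refine (eq_bot_or_eq_top_of_simple W _ fun x _ hy => ?_).resolve_left
      fun hbot => hw (LinearMap.range_eq_bot.mp hbot)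
    obtain ⟨v, hv⟩ := LinearMap.mem_range.mp hy
    obtain ⟨c, hc⟩ := hmem x
    exact ⟨(c : k) • V.ρ x v, by rw [map_smul, ← hv]; exact congr($hc v).symm⟩

noncomputable def isoOfEquiv {V W : FDRep k G} (e : Representation.Equiv V.ρ W.ρ) : V ≅ W :=
  Action.mkIso e.toLinearEquiv.toFGModuleCatIso fun g => by
    ext v
    exact IntertwiningMap.isIntertwining V.ρ W.ρ e.toIntertwiningMap g v

theorem conj_char (V : FDRep ℂ G) {g : G} (hg : IsOfFinOrder g) :
    starRingEnd ℂ (V.character g) = V.character g⁻¹ := by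
  have hn := hg.orderOf_pos.ne'
  rw [character, Module.End.conj_trace_eq_trace_pow_sub_one hn
      (by rw [← map_pow, pow_orderOf_eq_one, map_one]),
    ← map_pow, inv_eq_of_mul_eq_one_right (by rw [mul_pow_sub_one hn, pow_orderOf_eq_one])]
  rfl

theorem card_inv_mul_sum_char_mul_conj_char_eq_finrank [Fintype G] (V W : FDRep ℂ G) :
    (Nat.card G : ℂ)⁻¹ * ∑ g, W.character g * starRingEnd ℂ (V.character g) =
      finrank ℂ (IntertwiningMap V.ρ W.ρ) := by
  have : Invertible (Nat.card G : ℂ) := invertibleOfNonzero (by simp)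
  simp_rw [conj_char V (isOfFinOrder_of_finite _)]
  exact card_inv_mul_sum_char_mul_char_eq_finrank V.ρ W.ρ

theorem nonempty_equiv_res_of_isCyclic {H : Subgroup G} [H.Normal] (hcyc : IsCyclic (G ⧸ H))
    (V W : FDRep ℂ G) [Simple V] [Simple W]
    [Nontrivial (IntertwiningMap (V.ρ.comp H.subtype) (W.ρ.comp H.subtype))] :
    Nonempty (Representation.Equiv (V.ρ.comp H.subtype) (W.ρ.comp H.subtype)) := by
  obtain ⟨q, hq⟩ := hcyc.exists_generator
  obtain ⟨g, rfl⟩ := QuotientGroup.mk_surjective q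
  have : FiniteDimensional ℂ (IntertwiningMap (V.ρ.comp H.subtype) (W.ρ.comp H.subtype)) :=
    (invariantsEquivIntertwiningMap _ _).finiteDimensional
  obtain ⟨μ, hμ⟩ := (IntertwiningMap.conjRes V.ρ W.ρ H g).exists_eigenvalue
  obtain ⟨f, hf, hf0⟩ := hμ.exists_hasEigenvector
  have htop : scalarIntertwiningSubgroup V.ρ W.ρ f.toLinearMap = ⊤ :=
    Subgroup.eq_top_of_le_of_mem_of_forall_mem_zpowers_mk hq f.le_scalarIntertwiningSubgroup
      (IntertwiningMap.mem_scalarIntertwiningSubgroup_of_conjRes_eq_smul _ _ _ hf0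
        (Module.End.mem_eigenspace_iff.mp hf))
  exact ⟨f.ofBijective (bijective_of_scalarIntertwiningSubgroup_eq_top
    (fun h => hf0 (IntertwiningMap.ext h)) htop)⟩

end FDRep

theorem stmt_7 {G : Type} [Group G]
    (H : Subgroup G) [Fintype H] (hH : H.Normal) (hcyc : IsCyclic (G ⧸ H))
    (ρ ρ' : FDRep ℂ G) (hρ : Simple ρ) (hρ' : Simple ρ') :
    Nonempty ((Action.res (FGModuleCat ℂ) H.subtype).obj ρ ≅
        (Action.res (FGModuleCat ℂ) H.subtype).obj ρ') ∨
      (Nat.card H : ℂ)⁻¹ *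
        ∑ h : H, ρ.character (h : G) * (starRingEnd ℂ) (ρ'.character (h : G)) = 0 := by
  have hdim : (Nat.card H : ℂ)⁻¹ *
      ∑ h : H, ρ.character (h : G) * (starRingEnd ℂ) (ρ'.character (h : G)) =
        finrank ℂ (IntertwiningMap (ρ'.ρ.comp H.subtype) (ρ.ρ.comp H.subtype)) :=
    FDRep.card_inv_mul_sum_char_mul_conj_char_eq_finrank
      ((Action.res (FGModuleCat ℂ) H.subtype).obj ρ') ((Action.res (FGModuleCat ℂ) H.subtype).obj ρ)
  rw [or_iff_not_imp_right, hdim, Nat.cast_eq_zero]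
  intro hfinrank
  have := Module.nontrivial_of_finrank_pos (Nat.pos_of_ne_zero hfinrank)
  obtain ⟨e⟩ := FDRep.nonempty_equiv_res_of_isCyclic hcyc ρ' ρ
  exact ⟨(FDRep.isoOfEquiv e).symm⟩
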